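/- Parity on two circles: If a subset S of the arrows of a two-circle based Gauss diagram G is one-component, then the cardinality of S is odd. In particular, if G itself is one-component then its number of arrows n is odd. -/

import Mathlib

open Finset

/-- The cyclic successor on `Fin m`. -/
def cycSucc {m : ℕ} (x : Fin m) : Fin m :=
  ⟨((x : ℕ) + 1) % m, Nat.mod_lt _ x.pos⟩

/-- A based Gauss diagram on one circle with `n` arrows: the `2n` endpoint
positions are read counterclockwise starting just after the base point;
`t i` is the tail and `h i` the head of arrow `i`, all endpoints are pairwise
distinct, and `ε i ∈ {1, -1}` is the sign of arrow `i`. -/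
structure GaussDiagram (n : ℕ) where
  t : Fin n → Fin (2 * n)
  h : Fin n → Fin (2 * n)
  inj : Function.Injective (Sum.elim t h)
  ε : Fin n → ℤ
  sign : ∀ i, ε i = 1 ∨ ε i = -1

namespace GaussDiagram

variable {n : ℕ}

/-- The bijection between arrow-ends and endpoint positions. -/
noncomputable def ends (G : GaussDiagram n) : (Fin n ⊕ Fin n) ≃ Fin (2 * n) :=
  Equiv.ofBijective (Sum.elim G.t G.h)
    ((Fintype.bijective_iff_injective_and_card _).mpr ⟨G.inj, by simp [two_mul]⟩)

/-- The involution `μ` exchanging the tail and the head of each arrow. -/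
noncomputable def mu (G : GaussDiagram n) (x : Fin (2 * n)) : Fin (2 * n) :=
  G.ends (Sum.swap (G.ends.symm x))

/-- `σ x = μ x + 1 (mod 2n)`. -/
noncomputable def sigma (G : GaussDiagram n) (x : Fin (2 * n)) : Fin (2 * n) :=
  ⟨((G.mu x : ℕ) + 1) % (2 * n), Nat.mod_lt _ x.pos⟩

/-- `G` is one-component iff `σ` is a single cycle of length `2n`,
i.e. the `σ`-orbit of any position is everything. -/
def OneComponent (G : GaussDiagram n) : Prop :=
  ∀ x y : Fin (2 * n), ∃ k : ℕ, (G.sigma)^[k] x = y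

open Classical in
/-- The visit time of a position: the least `k` with `σ^[k] 0 = x`
(junk value `0` if there is none). -/
noncomputable def tau (G : GaussDiagram n) (x : Fin (2 * n)) : ℕ :=
  if hx : ∃ k : ℕ, (G.sigma)^[k] ⟨0, x.pos⟩ = x then Nat.find hx else 0

/-- `G` is ascending iff for every arrow the tail is visited before the head. -/
def Ascending (G : GaussDiagram n) : Prop :=
  ∀ i : Fin n, G.tau (G.t i) < G.tau (G.h i)

lemma t_injective (G : GaussDiagram n) : Function.Injective G.t := fun i j hij => by
  have := @G.inj (Sum.inl i) (Sum.inl j) hij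
  simpa using this

lemma h_injective (G : GaussDiagram n) : Function.Injective G.h := fun i j hij => by
  have := @G.inj (Sum.inr i) (Sum.inr j) hij
  simpa using this

lemma t_ne_h (G : GaussDiagram n) (i j : Fin n) : G.t i ≠ G.h j := fun e => by
  have := @G.inj (Sum.inl i) (Sum.inr j) e
  simp at this

/-- The set of endpoint positions of the arrows in `S`. -/
def posSet (G : GaussDiagram n) (S : Finset (Fin n)) : Finset (Fin (2 * n)) :=
  S.image G.t ∪ S.image G.h

lemma posSet_card (G : GaussDiagram n) (S : Finset (Fin n)) :
    (G.posSet S).card = 2 * S.card := by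
  rw [posSet, card_union_of_disjoint, card_image_of_injective _ G.t_injective,
    card_image_of_injective _ G.h_injective, two_mul]
  rw [disjoint_left]
  rintro a ha hb
  simp only [mem_image] at ha hb
  obtain ⟨i, -, rfl⟩ := ha
  obtain ⟨j, -, hj⟩ := hb
  exact G.t_ne_h i j hj.symm

lemma mem_posSet_t (G : GaussDiagram n) {S : Finset (Fin n)} {i : Fin n} (hi : i ∈ S) :
    G.t i ∈ G.posSet S := mem_union_left _ (mem_image_of_mem _ hi)

lemma mem_posSet_h (G : GaussDiagram n) {S : Finset (Fin n)} {i : Fin n} (hi : i ∈ S) :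
    G.h i ∈ G.posSet S := mem_union_right _ (mem_image_of_mem _ hi)

/-- The sub-diagram consisting of the arrows of `S` alone, with the endpoint
positions renumbered preserving their order. -/
noncomputable def sub (G : GaussDiagram n) (S : Finset (Fin n)) : GaussDiagram S.card where
  t j := ((G.posSet S).orderIsoOfFin (G.posSet_card S)).symm
    ⟨G.t (S.orderIsoOfFin rfl j), G.mem_posSet_t (S.orderIsoOfFin rfl j).2⟩
  h j := ((G.posSet S).orderIsoOfFin (G.posSet_card S)).symm
    ⟨G.h (S.orderIsoOfFin rfl j), G.mem_posSet_h (S.orderIsoOfFin rfl j).2⟩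
  ε j := G.ε (S.orderIsoOfFin rfl j)
  sign j := G.sign _
  inj := by
    have hP : Function.Injective ((G.posSet S).orderIsoOfFin (G.posSet_card S)).symm :=
      (OrderIso.injective _)
    have hA : Function.Injective (S.orderIsoOfFin rfl) := OrderIso.injective _
    rintro (i | i) (j | j) hij <;> simp only [Sum.elim_inl, Sum.elim_inr] at hij <;>
      have h1 := congrArg Subtype.val (hP hij)
    · have h2 := @G.inj (Sum.inl (S.orderIsoOfFin rfl i))
        (Sum.inl (S.orderIsoOfFin rfl j)) h1
      simp only [Sum.inl.injEq] at h2
      exact congrArg Sum.inl (hA (Subtype.ext h2))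
    · have h2 := @G.inj (Sum.inl (S.orderIsoOfFin rfl i))
        (Sum.inr (S.orderIsoOfFin rfl j)) h1
      simp at h2
    · have h2 := @G.inj (Sum.inr (S.orderIsoOfFin rfl i))
        (Sum.inl (S.orderIsoOfFin rfl j)) h1
      simp at h2
    · have h2 := @G.inj (Sum.inr (S.orderIsoOfFin rfl i))
        (Sum.inr (S.orderIsoOfFin rfl j)) h1
      simp only [Sum.inr.injEq] at h2
      exact congrArg Sum.inr (hA (Subtype.ext h2))

/-- A subset `S` of the arrows is one-component if the sub-diagram on `S` is. -/
def OneComponentSub (G : GaussDiagram n) (S : Finset (Fin n)) : Prop :=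
  (G.sub S).OneComponent

/-- A subset `S` of the arrows is ascending if the sub-diagram on `S` is. -/
def AscendingSub (G : GaussDiagram n) (S : Finset (Fin n)) : Prop :=
  (G.sub S).Ascending

open Classical in
/-- `F k G` is the sum over all one-component ascending subsets `S` of the
arrows with `|S| = k` of the product of the signs of the arrows in `S`. -/
noncomputable def F (G : GaussDiagram n) (k : ℕ) : ℤ :=
  ∑ S : Finset (Fin n),
    if S.card = k ∧ G.OneComponentSub S ∧ G.AscendingSub S then ∏ i ∈ S, G.ε i else 0

end GaussDiagram

/-- A based Gauss diagram on two circles with `n` arrows and endpoint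
distribution `(p, q)`: `p` endpoint positions on the first (based) circle and
`q` on the second, with `p + q = 2n`; `t i` is the tail and `h i` the head of
arrow `i`, all endpoints occur exactly once, and `ε i ∈ {1, -1}`. -/
structure GaussDiagram2 (n p q : ℕ) where
  hpq : p + q = 2 * n
  t : Fin n → Fin p ⊕ Fin q
  h : Fin n → Fin p ⊕ Fin q
  inj : Function.Injective (Sum.elim t h)
  ε : Fin n → ℤ
  sign : ∀ i, ε i = 1 ∨ ε i = -1

namespace GaussDiagram2

variable {n p q : ℕ}

/-- The bijection between arrow-ends and endpoint positions. -/
noncomputable def ends (G : GaussDiagram2 n p q) : (Fin n ⊕ Fin n) ≃ (Fin p ⊕ Fin q) :=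
  Equiv.ofBijective (Sum.elim G.t G.h)
    ((Fintype.bijective_iff_injective_and_card _).mpr ⟨G.inj, by
      have := G.hpq; simp only [Fintype.card_sum, Fintype.card_fin]; omega⟩)

/-- The involution `μ` exchanging the tail and the head of each arrow. -/
noncomputable def mu (G : GaussDiagram2 n p q) (x : Fin p ⊕ Fin q) : Fin p ⊕ Fin q :=
  G.ends (Sum.swap (G.ends.symm x))

/-- `σ x` is the cyclic successor, within its own circle, of `μ x`. -/
noncomputable def sigma (G : GaussDiagram2 n p q) (x : Fin p ⊕ Fin q) : Fin p ⊕ Fin q :=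
  Sum.map cycSucc cycSucc (G.mu x)

/-- `G` is one-component iff both circles carry endpoints and `σ` is a single
cycle of length `p + q`. -/
def OneComponent (G : GaussDiagram2 n p q) : Prop :=
  1 ≤ p ∧ 1 ≤ q ∧ ∀ x y : Fin p ⊕ Fin q, ∃ k : ℕ, (G.sigma)^[k] x = y

open Classical in
/-- The visit time of a position: the least `k` with `σ^[k] (inl 0) = x`,
iterating from position `0` of the first (based) circle
(junk value `0` if there is none or if `p = 0`). -/
noncomputable def tau (G : GaussDiagram2 n p q) (x : Fin p ⊕ Fin q) : ℕ :=
  if hp : 0 < p then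
    (if hx : ∃ k : ℕ, (G.sigma)^[k] (Sum.inl ⟨0, hp⟩) = x then Nat.find hx else 0)
  else 0

/-- `G` is ascending iff for every arrow the tail is visited before the head. -/
def Ascending (G : GaussDiagram2 n p q) : Prop :=
  ∀ i : Fin n, G.tau (G.t i) < G.tau (G.h i)

lemma t_injective (G : GaussDiagram2 n p q) : Function.Injective G.t := fun i j hij => by
  have := @G.inj (Sum.inl i) (Sum.inl j) hij
  simpa using this

lemma h_injective (G : GaussDiagram2 n p q) : Function.Injective G.h := fun i j hij => by
  have := @G.inj (Sum.inr i) (Sum.inr j) hij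
  simpa using this

lemma t_ne_h (G : GaussDiagram2 n p q) (i j : Fin n) : G.t i ≠ G.h j := fun e => by
  have := @G.inj (Sum.inl i) (Sum.inr j) e
  simp at this

/-- The set of endpoint positions of the arrows in `S`. -/
def posSet (G : GaussDiagram2 n p q) (S : Finset (Fin n)) : Finset (Fin p ⊕ Fin q) :=
  S.image G.t ∪ S.image G.h

lemma posSet_card (G : GaussDiagram2 n p q) (S : Finset (Fin n)) :
    (G.posSet S).card = 2 * S.card := by
  rw [posSet, card_union_of_disjoint, card_image_of_injective _ G.t_injective,
    card_image_of_injective _ G.h_injective, two_mul]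
  rw [disjoint_left]
  rintro a ha hb
  simp only [mem_image] at ha hb
  obtain ⟨i, -, rfl⟩ := ha
  obtain ⟨j, -, hj⟩ := hb
  exact G.t_ne_h i j hj.symm

lemma mem_posSet_t (G : GaussDiagram2 n p q) {S : Finset (Fin n)} {i : Fin n} (hi : i ∈ S) :
    G.t i ∈ G.posSet S := mem_union_left _ (mem_image_of_mem _ hi)

lemma mem_posSet_h (G : GaussDiagram2 n p q) {S : Finset (Fin n)} {i : Fin n} (hi : i ∈ S) :
    G.h i ∈ G.posSet S := mem_union_right _ (mem_image_of_mem _ hi)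

/-- Order preserving renumbering of the endpoint positions in `E` on each circle. -/
noncomputable def renum (E : Finset (Fin p ⊕ Fin q)) :
    ∀ x ∈ E, Fin E.toLeft.card ⊕ Fin E.toRight.card
  | Sum.inl a, hx => Sum.inl ((E.toLeft.orderIsoOfFin rfl).symm ⟨a, mem_toLeft.mpr hx⟩)
  | Sum.inr b, hx => Sum.inr ((E.toRight.orderIsoOfFin rfl).symm ⟨b, mem_toRight.mpr hx⟩)

lemma renum_inj (E : Finset (Fin p ⊕ Fin q)) {x y : Fin p ⊕ Fin q} (hx : x ∈ E) (hy : y ∈ E)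
    (hxy : renum E x hx = renum E y hy) : x = y := by
  rcases x with a | a <;> rcases y with b | b <;>
    simp only [renum, Sum.inl.injEq, Sum.inr.injEq, reduceCtorEq] at hxy
  · have := congrArg Subtype.val ((OrderIso.injective _) hxy)
    exact congrArg Sum.inl this
  · have := congrArg Subtype.val ((OrderIso.injective _) hxy)
    exact congrArg Sum.inr this

/-- The sub-diagram consisting of the arrows of `S` alone, with the endpoint
positions on each circle renumbered preserving their order. -/
noncomputable def sub (G : GaussDiagram2 n p q) (S : Finset (Fin n)) :
    GaussDiagram2 S.card (G.posSet S).toLeft.card (G.posSet S).toRight.card where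
  hpq := by rw [card_toLeft_add_card_toRight, G.posSet_card]
  t j := renum (G.posSet S) (G.t (S.orderIsoOfFin rfl j))
    (G.mem_posSet_t (S.orderIsoOfFin rfl j).2)
  h j := renum (G.posSet S) (G.h (S.orderIsoOfFin rfl j))
    (G.mem_posSet_h (S.orderIsoOfFin rfl j).2)
  ε j := G.ε (S.orderIsoOfFin rfl j)
  sign j := G.sign _
  inj := by
    have hA : Function.Injective (S.orderIsoOfFin rfl) := OrderIso.injective _
    rintro (i | i) (j | j) hij <;> simp only [Sum.elim_inl, Sum.elim_inr] at hij <;>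
      have h1 := renum_inj _ _ _ hij
    · have h2 := @G.inj (Sum.inl (S.orderIsoOfFin rfl i))
        (Sum.inl (S.orderIsoOfFin rfl j)) h1
      simp only [Sum.inl.injEq] at h2
      exact congrArg Sum.inl (hA (Subtype.ext h2))
    · have h2 := @G.inj (Sum.inl (S.orderIsoOfFin rfl i))
        (Sum.inr (S.orderIsoOfFin rfl j)) h1
      simp at h2
    · have h2 := @G.inj (Sum.inr (S.orderIsoOfFin rfl i))
        (Sum.inl (S.orderIsoOfFin rfl j)) h1
      simp at h2
    · have h2 := @G.inj (Sum.inr (S.orderIsoOfFin rfl i))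
        (Sum.inr (S.orderIsoOfFin rfl j)) h1
      simp only [Sum.inr.injEq] at h2
      exact congrArg Sum.inr (hA (Subtype.ext h2))

/-- A subset `S` of the arrows is one-component if the sub-diagram on `S` is. -/
def OneComponentSub (G : GaussDiagram2 n p q) (S : Finset (Fin n)) : Prop :=
  (G.sub S).OneComponent

/-- A subset `S` of the arrows is ascending if the sub-diagram on `S` is. -/
def AscendingSub (G : GaussDiagram2 n p q) (S : Finset (Fin n)) : Prop :=
  (G.sub S).Ascending

open Classical in
/-- `F k G` is the sum over all one-component ascending subsets `S` of the
arrows with `|S| = k` of the product of the signs of the arrows in `S`. -/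
noncomputable def F (G : GaussDiagram2 n p q) (k : ℕ) : ℤ :=
  ∑ S : Finset (Fin n),
    if S.card = k ∧ G.OneComponentSub S ∧ G.AscendingSub S then ∏ i ∈ S, G.ε i else 0

end GaussDiagram2

/-!
The permutation `σ` is the rotation of each circle composed with `μ`. The involution `μ` is a
product of `n` disjoint transpositions, and rotating a circle with `p` points has sign
`(-1)^(p-1)`, so `sign σ = (-1)^(p + q - 2 + n) = (-1)^n` since `p + q = 2n`. On the other
hand a single cycle through all `2n` points has sign `-1`, hence `n` is odd. A one-component
subset is handled by applying this to its sub-diagram.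
-/

open Equiv

lemma cycSucc_eq_finRotate {m : ℕ} (x : Fin m) : cycSucc x = finRotate m x := by
  have := x.neZero
  ext
  simp [cycSucc, finRotate_apply, Fin.val_add]

theorem Equiv.Perm.sign_sumComm_self (α : Type*) [Fintype α] [DecidableEq α] :
    Perm.sign (sumComm α α) = (-1) ^ Fintype.card α := by
  have h : sumComm α α =
      (boolProdEquivSum α).permCongr (prodCongrLeft fun _ : α => swap false true) := by
    ext (a | a) <;> simp [permCongr_apply, prodCongrLeft_apply]
  rw [h, Perm.sign_permCongr, Perm.sign_prodCongrLeft]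
  simp

theorem Equiv.Perm.sign_of_forall_exists_iterate {α : Type*} [Fintype α] [DecidableEq α]
    [Nontrivial α] {π : Perm α} (h : ∀ x y, ∃ k : ℕ, π^[k] x = y) :
    Perm.sign π = -(-1) ^ Fintype.card α := by
  have hfix : ∀ x, π x ≠ x := fun x hx => by
    obtain ⟨y, hy⟩ := exists_ne x
    obtain ⟨k, hk⟩ := h x y
    exact hy (hk ▸ Function.iterate_fixed hx k)
  obtain ⟨x⟩ := (inferInstance : Nonempty α)
  have hcycle : π.IsCycle := ⟨x, hfix x, fun y _ => by
    obtain ⟨k, hk⟩ := h x y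
    exact ⟨k, by rwa [zpow_natCast, ← Perm.iterate_eq_pow]⟩⟩
  have hsupport : π.support = Finset.univ := by
    ext y
    simpa using hfix y
  rw [hcycle.sign, hsupport, Finset.card_univ]

namespace GaussDiagram2

variable {n p q : ℕ}

noncomputable def sigmaPerm (G : GaussDiagram2 n p q) : Perm (Fin p ⊕ Fin q) :=
  Perm.sumCongr (finRotate p) (finRotate q) * G.ends.permCongr (sumComm (Fin n) (Fin n))

lemma coe_sigmaPerm (G : GaussDiagram2 n p q) : ⇑G.sigmaPerm = G.sigma := by
  funext x
  show Perm.sumCongr _ _ (G.ends (Sum.swap (G.ends.symm x))) = _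
  rw [sigma, mu]
  cases G.ends (Sum.swap (G.ends.symm x)) <;> simp [cycSucc_eq_finRotate]

lemma sign_sigmaPerm (G : GaussDiagram2 n p q) :
    Perm.sign G.sigmaPerm = (-1) ^ (p - 1) * (-1) ^ (q - 1) * (-1) ^ n := by
  rw [sigmaPerm, map_mul, Perm.sign_sumCongr, Perm.sign_permCongr, Perm.sign_sumComm_self,
    sign_finRotate, sign_finRotate, Fintype.card_fin]

theorem odd_of_oneComponent (G : GaussDiagram2 n p q) (hG : G.OneComponent) : Odd n := by
  obtain ⟨hp, hq, htrans⟩ := hG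
  have : Nontrivial (Fin p ⊕ Fin q) := ⟨⟨.inl ⟨0, hp⟩, .inr ⟨0, hq⟩, Sum.inl_ne_inr⟩⟩
  have hrotations : p - 1 + (q - 1) = 2 * (n - 1) := by have := G.hpq; omega
  have hsign : (-1 : ℤˣ) ^ n = -1 := calc
    (-1) ^ n = Perm.sign G.sigmaPerm := by
      rw [sign_sigmaPerm, ← pow_add, hrotations, pow_mul, Int.units_sq, one_pow, one_mul]
    _ = -(-1) ^ (p + q) := by
      rw [Perm.sign_of_forall_exists_iterate (by rwa [coe_sigmaPerm]), Fintype.card_sum,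
        Fintype.card_fin, Fintype.card_fin]
    _ = -1 := by rw [G.hpq, pow_mul, Int.units_sq, one_pow]
  exact (neg_one_pow_eq_neg_one_iff_odd (by decide)).mp hsign

end GaussDiagram2

theorem parity_two_circles {n p q : ℕ} (G : GaussDiagram2 n p q) :
    (∀ S : Finset (Fin n), G.OneComponentSub S → Odd S.card) ∧
    (G.OneComponent → Odd n) :=
  ⟨fun S hS => (G.sub S).odd_of_oneComponent hS, G.odd_of_oneComponent⟩
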